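/- Let 𝒜 = ⟨A,R⟩ be an almost bounded structure. Then S^ue ∪ P^ue = (S ∪ P)^ue = R^ue on Uf(A), and in any ultrapower 𝒜^* = ∏_I 𝒜/𝒟 one has S^* ∪ P^* = (S ∪ P)^* = R^*. -/
import Mathlib


open FirstOrder Cardinal

namespace UEx

/-- Elements of infinite in- or out-degree. -/
def RInf (R : A → A → Prop) : Set A :=
  {w | {v | R w v}.Infinite ∨ {v | R v w}.Infinite}

/-- A uniform finite bound on all in- and out-degrees. -/
def Bounded (R : A → A → Prop) : Prop :=
  ∃ n : ℕ, ∀ w : A, {v | R w v}.Finite ∧ {v | R v w}.Finite ∧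
    {v | R w v}.ncard ≤ n ∧ {v | R v w}.ncard ≤ n

/-- Almost bounded: finitely many elements of infinite degree, and a uniform
finite bound on the degrees of the remaining elements. -/
def AlmostBounded (R : A → A → Prop) : Prop :=
  (RInf R).Finite ∧ ∃ n : ℕ, ∀ w ∉ RInf R,
    {v | R w v}.ncard ≤ n ∧ {v | R v w}.ncard ≤ n

/-- P = {(s,t) ∈ R : s ∈ R∞ or t ∈ R∞}. -/
def PRel (R : A → A → Prop) (s t : A) : Prop := R s t ∧ (s ∈ RInf R ∨ t ∈ RInf R)

/-- S = R \ P. -/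
def SRel (R : A → A → Prop) (s t : A) : Prop := R s t ∧ ¬(s ∈ RInf R ∨ t ∈ RInf R)

/-- The ultrafilter extension of a binary relation. -/
def ueRel (Q : A → A → Prop) (u v : Ultrafilter A) : Prop :=
  ∀ X ∈ v, {w | ∃ s ∈ X, Q w s} ∈ u

/-- The setoid of 𝒟-a.e. equality on `I → A`. -/
def upSetoid (𝒟 : Ultrafilter I) (A : Type*) : Setoid (I → A) where
  r a b := {i | a i = b i} ∈ 𝒟
  iseqv := by
    refine ⟨fun a => ?_, fun {a b} h => ?_, fun {a b c} h1 h2 => ?_⟩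
    · have : {i | a i = a i} = (Set.univ : Set I) := by simp
      rw [this]
      exact Filter.univ_mem
    · exact Filter.mem_of_superset h fun i hi => (hi : _ = _).symm
    · exact Filter.mem_of_superset (Filter.inter_mem h1 h2) fun i hi =>
        (hi.1 : _ = _).trans hi.2

/-- The ultrapower of `A` modulo the ultrafilter `𝒟`. -/
def UP (𝒟 : Ultrafilter I) (A : Type*) : Type _ := Quotient (upSetoid 𝒟 A)

/-- The diagonal embedding into the ultrapower. -/
def diag (𝒟 : Ultrafilter I) (a : A) : UP 𝒟 A := Quotient.mk (upSetoid 𝒟 A) fun _ => a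

/-- The relation on the ultrapower given by Łoś's theorem. -/
def upRel (𝒟 : Ultrafilter I) (Q : A → A → Prop) : UP 𝒟 A → UP 𝒟 A → Prop :=
  Quotient.lift₂ (fun a b => {i | Q (a i) (b i)} ∈ 𝒟) <| by
    intro a b a' b' ha hb
    have ha' : {i | a i = a' i} ∈ 𝒟 := ha
    have hb' : {i | b i = b' i} ∈ 𝒟 := hb
    refine propext ⟨fun h => ?_, fun h => ?_⟩
    · refine Filter.mem_of_superset (Filter.inter_mem (Filter.inter_mem h ha') hb') ?_
      rintro i ⟨⟨h1, h2⟩, h3⟩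
      simp only [Set.mem_setOf_eq] at *
      rw [← h2, ← h3]; exact h1
    · refine Filter.mem_of_superset (Filter.inter_mem (Filter.inter_mem h ha') hb') ?_
      rintro i ⟨⟨h1, h2⟩, h3⟩
      simp only [Set.mem_setOf_eq] at *
      rw [h2, h3]; exact h1

/-- `𝒟` is `κ`-regular. -/
def IsRegular (𝒟 : Ultrafilter I) (κ : Cardinal) : Prop :=
  ∃ E : Set (Set I), (∀ X ∈ E, X ∈ 𝒟) ∧ #E = κ ∧ ∀ i : I, {X ∈ E | i ∈ X}.Finite
/-- For an almost bounded structure, `S^ue ∪ P^ue = (S ∪ P)^ue = R^ue`, and in any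
ultrapower `S^* ∪ P^* = (S ∪ P)^* = R^*`. -/
theorem union_ue_up {A I : Type*} [Infinite I] (R : A → A → Prop)
    (𝒟 : Ultrafilter I) (h : AlmostBounded R) :
    (∀ u v : Ultrafilter A,
      ((ueRel (SRel R) u v ∨ ueRel (PRel R) u v) ↔
        ueRel (fun s t => SRel R s t ∨ PRel R s t) u v) ∧
      (ueRel (fun s t => SRel R s t ∨ PRel R s t) u v ↔ ueRel R u v)) ∧
    (∀ x y : UP 𝒟 A,
      ((upRel 𝒟 (SRel R) x y ∨ upRel 𝒟 (PRel R) x y) ↔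
        upRel 𝒟 (fun s t => SRel R s t ∨ PRel R s t) x y) ∧
      (upRel 𝒟 (fun s t => SRel R s t ∨ PRel R s t) x y ↔ upRel 𝒟 R x y)) := by
  have hR : ∀ s t : A, (SRel R s t ∨ PRel R s t) ↔ R s t := by
    intro s t
    constructor
    · rintro (⟨h, _⟩ | ⟨h, _⟩) <;> exact h
    · intro hst
      by_cases hc : s ∈ RInf R ∨ t ∈ RInf R
      · exact Or.inr ⟨hst, hc⟩
      · exact Or.inl ⟨hst, hc⟩
  constructor
  · intro u v
    have mono : ∀ (Q Q' : A → A → Prop), (∀ s t, Q s t → Q' s t) →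
        ueRel Q u v → ueRel Q' u v := by
      intro Q Q' hQQ hQ X hX
      refine Filter.mem_of_superset (hQ X hX) ?_
      rintro w ⟨s, hs, hws⟩
      exact ⟨s, hs, hQQ _ _ hws⟩
    constructor
    · constructor
      · rintro (hS | hP)
        · exact mono _ _ (fun s t h => Or.inl h) hS
        · exact mono _ _ (fun s t h => Or.inr h) hP
      · intro hSP
        by_contra hcon
        push_neg at hcon
        obtain ⟨hS, hP⟩ := hcon
        simp only [ueRel, not_forall] at hS hP
        obtain ⟨X, hXv, hXu⟩ := hS
        obtain ⟨Y, hYv, hYu⟩ := hP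
        have hU := hSP (X ∩ Y) (Filter.inter_mem hXv hYv)
        have h1 : {w | ∃ s ∈ X, SRel R w s}ᶜ ∈ u :=
          (Ultrafilter.compl_mem_iff_notMem).2 hXu
        have h2 : {w | ∃ s ∈ Y, PRel R w s}ᶜ ∈ u :=
          (Ultrafilter.compl_mem_iff_notMem).2 hYu
        obtain ⟨w, ⟨⟨s, hs, hws⟩, hw1⟩, hw2⟩ :=
          Filter.nonempty_of_mem (Filter.inter_mem (Filter.inter_mem hU h1) h2)
        rcases hws with hws | hws
        · exact hw1 ⟨s, hs.1, hws⟩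
        · exact hw2 ⟨s, hs.2, hws⟩
    · constructor
      · exact mono _ _ (fun s t h => (hR s t).1 h)
      · exact mono _ _ (fun s t h => (hR s t).2 h)
  · intro x y
    refine Quotient.inductionOn₂ x y ?_
    intro a b
    have key : ∀ Q : A → A → Prop,
        upRel 𝒟 Q (Quotient.mk (upSetoid 𝒟 A) a) (Quotient.mk (upSetoid 𝒟 A) b) ↔
          {i | Q (a i) (b i)} ∈ 𝒟 := fun Q => Iff.rfl
    constructor
    · rw [key, key, key]
      have hsplit : {i | SRel R (a i) (b i) ∨ PRel R (a i) (b i)} =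
          {i | SRel R (a i) (b i)} ∪ {i | PRel R (a i) (b i)} := rfl
      rw [hsplit, Ultrafilter.union_mem_iff]
    · rw [key, key]
      have : {i | SRel R (a i) (b i) ∨ PRel R (a i) (b i)} = {i | R (a i) (b i)} := by
        ext i; exact hR _ _
      rw [this]

end UEx
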